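/- arXiv:2605.10631 — 5 statements merged into one kernel-verified Lean document; each statement's English description precedes it below -/
import Mathlib

section
/- If the issued-before relation ib = (ippo ∪ rf ∪ pf ∪ nfo)⁺ has a cycle, then the observed-before relation ob has a cycle, given that: (1) every edge in (ippo ∪ rf ∪ pf ∪ nfo) \ ob has a target event that is instantaneous, and (2) ob contains ([Inst]; ib), i.e., every ib-edge whose source is instantaneous is an ob-edge. Consequently, ib acyclic is implied by ob acyclic. -/
lemma aux_key {E : Type} (Inst : Set E) (r ob : E → E → Prop)
    (ha : ∀ e₁ e₂, r e₁ e₂ → ¬ ob e₁ e₂ → e₂ ∈ Inst) :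
    ∀ a b, Relation.TransGen r a b →
      Relation.TransGen ob a b ∨
        ∃ y, y ∈ Inst ∧ Relation.ReflTransGen r y b ∧ Relation.TransGen r a y := by
  intro a b h
  induction h with
  | @single c h =>
    by_cases hob : ob a c
    · exact Or.inl (Relation.TransGen.single hob)
    · exact Or.inr ⟨c, ha _ _ h hob, Relation.ReflTransGen.refl, Relation.TransGen.single h⟩
  | @tail c d hac hcd ih =>
    rcases ih with hob | ⟨y, hy, hyc, hay⟩
    · by_cases h2 : ob c d
      · exact Or.inl (hob.tail h2)
      · exact Or.inr ⟨d, ha _ _ hcd h2, Relation.ReflTransGen.refl, hac.tail hcd⟩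
    · exact Or.inr ⟨y, hy, hyc.tail hcd, hay⟩

/-- If `ib = (ippo ∪ rf ∪ pf ∪ nfo)⁺` is cyclic, then `ob` is cyclic,
given that every edge in `(ippo ∪ rf ∪ pf ∪ nfo) \ ob` has an instantaneous target
and `ob` contains `[Inst]; ib`. -/
theorem stmt0 {E : Type} [Fintype E] (Inst : Set E)
    (ippo rf pf nfo ob : E → E → Prop)
    (htrans : Transitive ob)
    (ha : ∀ e₁ e₂, (ippo e₁ e₂ ∨ rf e₁ e₂ ∨ pf e₁ e₂ ∨ nfo e₁ e₂) → ¬ ob e₁ e₂ → e₂ ∈ Inst)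
    (hb : ∀ e₁ e₂,
      Relation.TransGen (fun a b => ippo a b ∨ rf a b ∨ pf a b ∨ nfo a b) e₁ e₂ →
      e₁ ∈ Inst → ob e₁ e₂)
    (hcyc : ∃ e, Relation.TransGen (fun a b => ippo a b ∨ rf a b ∨ pf a b ∨ nfo a b) e e) :
    ∃ e, Relation.TransGen ob e e := by
  obtain ⟨e, he⟩ := hcyc
  rcases aux_key Inst _ ob ha e e he with h | ⟨y, hy, hye, hey⟩
  · exact ⟨e, h⟩
  · have hyy := Relation.TransGen.trans_right hye hey
    exact ⟨y, Relation.TransGen.single (hb y y hyy hy)⟩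
end

section
/- In a finite directed graph whose vertices are events partitioned among finitely many threads, if there exists a cycle over edges of the form po ∪ com (where po relates events on the same thread ordered by program counter, and com is an arbitrary inter-event communication relation), then there exists a cycle over po ∪ com that visits each thread at most once (i.e., for each thread, at most one maximal po-segment of the cycle lies on that thread, which can be contracted to a pair of entry/exit events). -/
section AuxStmt2

variable {E Tid : Type} (t : E → Tid) (ι : E → ℕ) (com : E → E → Prop)

/-- Cycle predicate matching the statement. -/
def IsCycS2 (n : ℕ) (c : ℕ → E) : Prop :=
  1 ≤ n ∧ c n = c 0 ∧
    ∀ i < n, (t (c i) = t (c (i+1)) ∧ ι (c i) < ι (c (i+1))) ∨ com (c i) (c (i+1))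

lemma isCycS2_rot {n : ℕ} (hn : 2 ≤ n) {c d : ℕ → E} (h : IsCycS2 t ι com n c) (r : ℕ)
    (hd : ∀ k, d k = c ((k + r) % n)) : IsCycS2 t ι com n d := by
  obtain ⟨h1, h2, h3⟩ := h
  have h1' : 1 % n = 1 := Nat.mod_eq_of_lt (by omega)
  refine ⟨h1, ?_, ?_⟩
  · rw [hd, hd, Nat.add_mod_left, Nat.zero_add]
  · intro i hi
    have ha : (i + r) % n < n := Nat.mod_lt _ (by omega)
    have key : (i + 1 + r) % n = ((i + r) % n + 1) % n := by
      rw [show i + 1 + r = i + r + 1 by ring, Nat.add_mod (i+r) 1 n, h1']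
    have e2 : d (i + 1) = c ((i + r) % n + 1) := by
      by_cases hA : (i + r) % n + 1 = n
      · rw [hd, key, hA, Nat.mod_self, ← h2]
      · rw [hd, key, Nat.mod_eq_of_lt (by omega)]
    rw [hd, e2]
    exact h3 _ ha

lemma minCyc_ne {n : ℕ} {c : ℕ → E}
    (hinj : ∀ a b : E, t a = t b → ι a = ι b → a = b)
    (h : IsCycS2 t ι com n c)
    (hmin : ∀ m (d : ℕ → E), IsCycS2 t ι com m d → n ≤ m)
    {i j : ℕ} (hij : i < j) (hj : j < n) (ht : t (c i) = t (c j)) :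
    ι (c i) ≠ ι (c j) := by
  intro hι
  have hcij : c i = c j := hinj _ _ ht hι
  have hsub : IsCycS2 t ι com (j - i) (fun k => c (i + k)) := by
    refine ⟨by omega, ?_, ?_⟩
    · show c (i + (j - i)) = c (i + 0)
      rw [show i + (j - i) = j by omega, Nat.add_zero, ← hcij]
    · intro k hk
      show (t (c (i + k)) = t (c (i + (k + 1))) ∧ ι (c (i + k)) < ι (c (i + (k + 1)))) ∨
        com (c (i + k)) (c (i + (k + 1)))
      rw [show i + (k + 1) = (i + k) + 1 by ring]
      exact h.2.2 (i + k) (by omega)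
  have := hmin _ _ hsub
  omega

lemma minCyc_inc_adj {n : ℕ} {c : ℕ → E}
    (h : IsCycS2 t ι com n c)
    (hmin : ∀ m (d : ℕ → E), IsCycS2 t ι com m d → n ≤ m)
    {i j : ℕ} (hij : i < j) (hj : j < n) (ht : t (c i) = t (c j))
    (hι : ι (c i) < ι (c j)) : j = i + 1 := by
  by_contra hne
  have h2i : i + 2 ≤ j := by omega
  set m := n - (j - i - 1) with hm
  have hsub : IsCycS2 t ι com m (fun k => if k ≤ i then c k else c (k + (j - i - 1))) := by
    refine ⟨by omega, ?_, ?_⟩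
    · show (if m ≤ i then c m else c (m + (j - i - 1))) = (if 0 ≤ i then c 0 else c (0 + (j - i - 1)))
      rw [if_neg (by omega), if_pos (by omega), show m + (j - i - 1) = n by omega, h.2.1]
    · intro k hk
      show (t (if k ≤ i then c k else c (k + (j - i - 1))) =
              t (if k + 1 ≤ i then c (k + 1) else c (k + 1 + (j - i - 1))) ∧
            ι (if k ≤ i then c k else c (k + (j - i - 1))) <
              ι (if k + 1 ≤ i then c (k + 1) else c (k + 1 + (j - i - 1)))) ∨
        com (if k ≤ i then c k else c (k + (j - i - 1)))
            (if k + 1 ≤ i then c (k + 1) else c (k + 1 + (j - i - 1)))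
      rcases lt_trichotomy k i with hk' | hk' | hk'
      · rw [if_pos (by omega), if_pos (by omega)]
        exact h.2.2 k (by omega)
      · subst hk'
        rw [if_pos (by omega), if_neg (by omega), show k + 1 + (j - k - 1) = j by omega]
        exact Or.inl ⟨ht, hι⟩
      · rw [if_neg (by omega), if_neg (by omega),
          show k + 1 + (j - i - 1) = (k + (j - i - 1)) + 1 by ring]
        exact h.2.2 (k + (j - i - 1)) (by omega)
  have := hmin _ _ hsub
  omega

lemma minCyc_dec {n : ℕ} {c : ℕ → E}
    (h : IsCycS2 t ι com n c)
    (hmin : ∀ m (d : ℕ → E), IsCycS2 t ι com m d → n ≤ m)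
    {i j : ℕ} (hij : i < j) (hj : j < n) (ht : t (c i) = t (c j))
    (hι : ι (c j) < ι (c i)) : i = 0 ∧ j = n - 1 := by
  have hsub : IsCycS2 t ι com (j - i + 1) (fun k => if k ≤ j - i then c (i + k) else c i) := by
    refine ⟨by omega, ?_, ?_⟩
    · show (if j - i + 1 ≤ j - i then c (i + (j - i + 1)) else c i) =
        (if 0 ≤ j - i then c (i + 0) else c i)
      rw [if_neg (by omega), if_pos (by omega), Nat.add_zero]
    · intro k hk
      show (t (if k ≤ j - i then c (i + k) else c i) =
              t (if k + 1 ≤ j - i then c (i + (k + 1)) else c i) ∧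
            ι (if k ≤ j - i then c (i + k) else c i) <
              ι (if k + 1 ≤ j - i then c (i + (k + 1)) else c i)) ∨
        com (if k ≤ j - i then c (i + k) else c i)
            (if k + 1 ≤ j - i then c (i + (k + 1)) else c i)
      rcases lt_or_eq_of_le (show k ≤ j - i by omega) with hk' | hk'
      · rw [if_pos (by omega), if_pos (by omega),
          show i + (k + 1) = (i + k) + 1 by ring]
        exact h.2.2 (i + k) (by omega)
      · subst hk'
        rw [if_pos (by omega), if_neg (by omega), show i + (j - i) = j by omega]
        exact Or.inl ⟨ht.symm, hι⟩
  have := hmin _ _ hsub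
  constructor <;> omega

end AuxStmt2

/-- If there is a cycle over `po ∪ com`, then there is such a cycle in which
each thread's events form a single contiguous po-increasing segment (so each thread is
visited at most once, with one entry and one exit event). -/
theorem stmt2 {E Tid : Type} [Fintype E] [Fintype Tid]
    (t : E → Tid) (ι : E → ℕ)
    (hinj : ∀ a b : E, t a = t b → ι a = ι b → a = b)
    (com : E → E → Prop)
    (hcyc : ∃ (n : ℕ) (c : ℕ → E), 1 ≤ n ∧ c n = c 0 ∧
      ∀ i < n, (t (c i) = t (c (i+1)) ∧ ι (c i) < ι (c (i+1))) ∨ com (c i) (c (i+1))) :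
    ∃ (n : ℕ) (c : ℕ → E), 1 ≤ n ∧ c n = c 0 ∧
      (∀ i < n, (t (c i) = t (c (i+1)) ∧ ι (c i) < ι (c (i+1))) ∨ com (c i) (c (i+1))) ∧
      -- contiguity: the indices on any given thread form a single block
      (∀ i j k, i ≤ k → k ≤ j → j < n → t (c i) = t (c j) → t (c k) = t (c i)) ∧
      -- po-increasing within each thread's segment
      (∀ i j, i < j → j < n → t (c i) = t (c j) → ι (c i) < ι (c j)) := by
  classical
  obtain ⟨n0, c0, h0⟩ := hcyc
  have hQ : ∃ m, ∃ c : ℕ → E, IsCycS2 t ι com m c := ⟨n0, c0, h0⟩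
  set n := Nat.find hQ with hn
  obtain ⟨c, hc⟩ : ∃ c : ℕ → E, IsCycS2 t ι com n c := Nat.find_spec hQ
  have hmin : ∀ m (d : ℕ → E), IsCycS2 t ι com m d → n ≤ m := by
    intro m d hd
    by_contra hlt
    exact Nat.find_min hQ (by omega) ⟨d, hd⟩
  obtain ⟨h1, h2, h3⟩ := hc
  have hcFull : IsCycS2 t ι com n c := ⟨h1, h2, h3⟩
  by_cases hB : ∀ s, s < n → t (c s) = t (c (s+1))
  · -- all events on the same thread
    have hall : ∀ i, i ≤ n → t (c i) = t (c 0) := by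
      intro i
      induction i with
      | zero => intro _; rfl
      | succ k ih =>
        intro hk
        rw [← hB k (by omega)]
        exact ih (by omega)
    have hn2 : n ≤ 2 := by
      by_contra h3n
      push_neg at h3n
      have hadj : ∀ i, i + 1 < n → ι (c i) < ι (c (i+1)) := by
        intro i hi
        have ht : t (c i) = t (c (i+1)) := hB i (by omega)
        have hne := minCyc_ne t ι com hinj hcFull hmin (show i < i + 1 by omega) hi ht
        rcases lt_or_gt_of_ne hne with h | h
        · exact h
        · obtain ⟨hi0, hj⟩ := minCyc_dec t ι com hcFull hmin
            (show i < i + 1 by omega) hi ht h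
          omega
      have hchain : ∀ i, 1 ≤ i → i < n → ι (c 0) < ι (c i) := by
        intro i
        induction i with
        | zero => omega
        | succ k ih =>
          intro _ hk
          rcases Nat.eq_or_lt_of_le (show 1 ≤ k + 1 from by omega) with h | h
          · rw [← h]
            exact hadj 0 (by omega)
          · exact lt_trans (ih (by omega) (by omega)) (hadj k (by omega))
      have hι0 : ι (c 0) < ι (c (n-1)) := hchain (n-1) (by omega) (by omega)
      have := minCyc_inc_adj t ι com hcFull hmin (show 0 < n - 1 by omega) (by omega)
        ((hall (n-1) (by omega)).symm) hι0
      omega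
    rcases (show n = 1 ∨ n = 2 by omega) with heq | heq
    · -- n = 1
      refine ⟨n, c, h1, h2, h3, ?_, ?_⟩
      · intro i j k hik hkj hj ht
        obtain rfl : k = i := by omega
        rfl
      · intro i j hij hj ht
        omega
    · -- n = 2, all same thread
      have ht01 : t (c 0) = t (c 1) := hB 0 (by omega)
      have hne := minCyc_ne t ι com hinj hcFull hmin (show 0 < 1 by omega) (by omega) ht01
      rcases lt_or_gt_of_ne hne with hι | hι
      · refine ⟨n, c, h1, h2, h3, ?_, ?_⟩
        · intro i j k hik hkj hj ht
          rw [hall k (by omega), hall i (by omega)]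
        · intro i j hij hj ht
          obtain rfl : i = 0 := by omega
          obtain rfl : j = 1 := by omega
          exact hι
      · -- rotate by 1
        set d : ℕ → E := fun k => c ((k + 1) % n) with hdd
        have hd : ∀ k, d k = c ((k + 1) % n) := fun _ => rfl
        have hdcyc := isCycS2_rot t ι com (by omega) hcFull 1 hd
        have hd0 : d 0 = c 1 := by rw [hd]; norm_num [heq]
        have hd1 : d 1 = c 0 := by rw [hd, heq]
        refine ⟨n, d, hdcyc.1, hdcyc.2.1, hdcyc.2.2, ?_, ?_⟩
        · intro i j k hik hkj hj ht
          have e : ∀ m, t (d m) = t (c 0) := by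
            intro m
            rw [hd]
            exact hall _ (le_of_lt (Nat.mod_lt _ (by omega)))
          rw [e k, e i]
        · intro i j hij hj ht
          obtain rfl : i = 0 := by omega
          obtain rfl : j = 1 := by omega
          rw [hd0, hd1]
          exact hι
  · -- some thread boundary exists: rotate to start right after it
    push_neg at hB
    obtain ⟨s, hs, hst⟩ := hB
    have hn2 : 2 ≤ n := by
      by_contra hlt
      have hn1 : n = 1 := by omega
      apply hst
      obtain rfl : s = 0 := by omega
      have : c 1 = c 0 := by rw [show (1:ℕ) = n by omega, h2]
      rw [this]
    set d : ℕ → E := fun k => c ((k + (s + 1)) % n) with hdd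
    have hd : ∀ k, d k = c ((k + (s + 1)) % n) := fun _ => rfl
    have hdcyc := isCycS2_rot t ι com hn2 hcFull (s + 1) hd
    have hdn1 : d (n - 1) = c s := by
      rw [hd, show n - 1 + (s + 1) = n + s by omega, Nat.add_mod_left,
        Nat.mod_eq_of_lt hs]
    have hd0t : t (d 0) = t (c (s + 1)) := by
      rw [hd, Nat.zero_add]
      by_cases hA : s + 1 = n
      · rw [hA, Nat.mod_self, ← h2]
      · rw [Nat.mod_eq_of_lt (by omega)]
    have hkey : t (d 0) ≠ t (d (n - 1)) := by
      rw [hd0t, hdn1]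
      exact fun h => hst h.symm
    have hinc : ∀ i j, i < j → j < n → t (d i) = t (d j) → ι (d i) < ι (d j) := by
      intro i j hij hj ht
      have hne := minCyc_ne t ι com hinj hdcyc hmin hij hj ht
      rcases lt_or_gt_of_ne hne with h | h
      · exact h
      · obtain ⟨hi0, hj1⟩ := minCyc_dec t ι com hdcyc hmin hij hj ht h
        subst hi0; subst hj1
        exact absurd ht hkey
    refine ⟨n, d, hdcyc.1, hdcyc.2.1, hdcyc.2.2, ?_, hinc⟩
    · intro i j k hik hkj hj ht
      rcases Nat.eq_or_lt_of_le (show i ≤ j by omega) with h | h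
      · obtain rfl : k = i := by omega
        rfl
      · have hι := hinc i j h hj ht
        have hadj := minCyc_inc_adj t ι com hdcyc hmin h hj ht hι
        rcases (show k = i ∨ k = j by omega) with rfl | rfl
        · rfl
        · exact ht.symm
end

section
/- Let τ be an enumeration of a finite event set E. Define rf(τ), mo(τ), and rb(τ) = rf(τ)⁻¹ ; mo(τ) as the induced reads-from, modification-order, and reads-before relations. Then every edge of rb(τ) is a forward edge with respect to τ: if (r, w') ∈ rb(τ) then r precedes w' in τ. -/
/-- Modification order induced by an enumeration. -/
def moOf9 {Loc : Type} (n : ℕ) (W : Set (Fin n)) (loc : Fin n → Loc) :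
    Fin n → Fin n → Prop :=
  fun i j => i < j ∧ i ∈ W ∧ j ∈ W ∧ loc i = loc j

/-- Reads-from induced by an enumeration: the latest write on the same location
strictly before the read (reads are the non-writes). -/
def rfOf9 {Loc : Type} (n : ℕ) (W : Set (Fin n)) (loc : Fin n → Loc) :
    Fin n → Fin n → Prop :=
  fun i j => i < j ∧ i ∈ W ∧ j ∉ W ∧ loc i = loc j ∧
    ∀ k, i < k → k < j → k ∈ W → loc k ≠ loc j

/-- Every edge of `rb(τ) = rf(τ)⁻¹ ; mo(τ)` is a forward edge:
the read strictly precedes the write in the enumeration. -/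
theorem stmt9 {Loc : Type} (n : ℕ) (W : Set (Fin n)) (loc : Fin n → Loc) :
    ∀ r w' : Fin n, (∃ w, rfOf9 n W loc w r ∧ moOf9 n W loc w w') → r < w' := by
  rintro r w' ⟨w, ⟨hwr, hwW, hrW, hlocr, hlatest⟩, hww', _, hw'W, hlocw'⟩
  by_contra h
  push_neg at h
  rcases lt_or_eq_of_le h with hlt | heq
  · exact hlatest w' hww' hlt hw'W (hlocw'.symm.trans hlocr)
  · exact hrW (heq ▸ hw'W)
end

section
/- In the polls-from relation defined by matching the k-th poll on a queue pair to the k-th NIC write on the same queue pair (in program order), every poll event has exactly one pf-predecessor, provided that at every program-order prefix the number of NIC writes on each queue pair is at least the number of polls on the same queue pair. -/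
open Finset

private lemma nat_rank_lemma (T : Finset ℕ) (k : ℕ) (hk : k < T.card) :
    ∃! t, t ∈ T ∧ (T.filter (· < t)).card = k := by
  classical
  set c : ℕ → ℕ := fun t => (T.filter (· < t)).card with hc
  have hmono : ∀ a ∈ T, ∀ b ∈ T, a < b → c a < c b := by
    intro a ha b hb hab
    apply Finset.card_lt_card
    refine ⟨?_, ?_⟩
    · intro x hx
      rw [Finset.mem_filter] at hx ⊢
      exact ⟨hx.1, lt_trans hx.2 hab⟩
    · intro hsub
      have : a ∈ T.filter (· < a) := hsub (Finset.mem_filter.mpr ⟨ha, hab⟩)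
      exact absurd (Finset.mem_filter.mp this).2 (lt_irrefl a)
  have hinj : Set.InjOn c T := by
    intro a ha b hb hab
    rcases lt_trichotomy a b with h | h | h
    · exact absurd hab (ne_of_lt (hmono a ha b hb h))
    · exact h
    · exact absurd hab.symm (ne_of_lt (hmono b hb a ha h))
  have hlt : ∀ t ∈ T, c t < T.card := by
    intro t ht
    apply Finset.card_lt_card
    refine ⟨Finset.filter_subset _ _, ?_⟩
    intro hsub
    have : t ∈ T.filter (· < t) := hsub ht
    exact absurd (Finset.mem_filter.mp this).2 (lt_irrefl t)
  have himg : T.image c = Finset.range T.card := by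
    apply Finset.eq_of_subset_of_card_le
    · intro x hx
      rcases Finset.mem_image.mp hx with ⟨t, ht, rfl⟩
      exact Finset.mem_range.mpr (hlt t ht)
    · rw [Finset.card_range, Finset.card_image_of_injOn hinj]
  have hk' : k ∈ T.image c := by rw [himg]; exact Finset.mem_range.mpr hk
  rcases Finset.mem_image.mp hk' with ⟨t, ht, hct⟩
  refine ⟨t, ⟨ht, hct⟩, ?_⟩
  intro t' ⟨ht', hct'⟩
  exact hinj ht' ht (hct'.trans hct.symm)

/-- In the polls-from relation (k-th poll matched to the k-th NIC write
on the same queue pair, in program order), every poll has exactly one pf-predecessor,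
given the well-formedness counting invariant. -/
theorem stmt10 {E N : Type} [Fintype E] (ι : E → ℕ) (hι : Function.Injective ι)
    (W P : Set E) (q : E → N)
    (hwf : ∀ p ∈ P,
      {p' | p' ∈ P ∧ q p' = q p ∧ ι p' < ι p}.ncard <
      {w | w ∈ W ∧ q w = q p ∧ ι w < ι p}.ncard) :
    ∀ p ∈ P, ∃! w : E, w ∈ W ∧ q w = q p ∧ ι w < ι p ∧
      {w' | w' ∈ W ∧ q w' = q w ∧ ι w' < ι w}.ncard =
      {p' | p' ∈ P ∧ q p' = q p ∧ ι p' < ι p}.ncard := by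
  classical
  intro p hp
  set k := {p' | p' ∈ P ∧ q p' = q p ∧ ι p' < ι p}.ncard with hkdef
  set Sw : Set E := {w | w ∈ W ∧ q w = q p ∧ ι w < ι p} with hSw
  have hfin : Sw.Finite := Set.toFinite _
  set F : Finset E := hfin.toFinset with hF
  have hFcard : Sw.ncard = F.card := Set.ncard_eq_toFinset_card _ hfin
  set T : Finset ℕ := F.image ι with hT
  have hTcard : T.card = F.card := Finset.card_image_of_injective _ hι
  have hk : k < T.card := by
    rw [hTcard, ← hFcard]; exact hwf p hp
  -- key: for w ∈ Sw, the pf-count set equals the filtered set, and transfers to T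
  have hcount : ∀ w ∈ F, {w' | w' ∈ W ∧ q w' = q w ∧ ι w' < ι w}.ncard
      = (T.filter (· < ι w)).card := by
    intro w hw
    have hwS : w ∈ Sw := (Set.Finite.mem_toFinset hfin).mp hw
    obtain ⟨hwW, hwq, hwι⟩ := hwS
    have hseteq : {w' | w' ∈ W ∧ q w' = q w ∧ ι w' < ι w}
        = ↑(F.filter (fun x => ι x < ι w)) := by
      ext x
      simp only [Finset.coe_filter, Set.mem_setOf_eq, hF, Set.Finite.mem_toFinset, hSw]
      constructor
      · rintro ⟨hxW, hxq, hxι⟩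
        exact ⟨⟨hxW, hxq.trans hwq, hxι.trans hwι⟩, hxι⟩
      · rintro ⟨⟨hxW, hxq, _⟩, hxι⟩
        exact ⟨hxW, hxq.trans hwq.symm, hxι⟩
    rw [hseteq, Set.ncard_coe_finset]
    have : (F.filter (fun x => ι x < ι w)).image ι = T.filter (· < ι w) := by
      rw [hT, Finset.filter_image]
    rw [← this, Finset.card_image_of_injective _ hι]
  obtain ⟨t, ⟨htT, htc⟩, huniq⟩ := nat_rank_lemma T k hk
  rcases Finset.mem_image.mp htT with ⟨w, hwF, rfl⟩
  have hwS : w ∈ Sw := (Set.Finite.mem_toFinset hfin).mp hwF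
  obtain ⟨hwW, hwq, hwι⟩ := hwS
  refine ⟨w, ⟨hwW, hwq, hwι, by rw [hcount w hwF, htc]⟩, ?_⟩
  rintro w' ⟨hw'W, hw'q, hw'ι, hw'c⟩
  have hw'F : w' ∈ F := (Set.Finite.mem_toFinset hfin).mpr ⟨hw'W, hw'q, hw'ι⟩
  have : ι w' = ι w := by
    apply huniq
    refine ⟨Finset.mem_image_of_mem _ hw'F, ?_⟩
    rw [← hcount w' hw'F, hw'c]
  exact hι this
end

section
/- In a trace, the derived relation ippo \ oppo consists only of edges whose target is a NIC fence, and ([nrW]; pf) consists only of edges whose target is a poll. Hence every edge in (ippo ∪ rf ∪ pf ∪ nfo) \ ob has a target that is an instantaneous event, given that rf, nfo, ([nlW]; pf), and oppo are contained in ob. -/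
/-- Event types: CPU events (`cpu` and polls `pl`), NIC local/remote reads and writes,
and NIC fences. -/
inductive EvType where
  | cpu | pl | nlR | nrW | nrR | nlW | nF
  deriving DecidableEq

/-- CPU events (including polls). -/
def EvType.isCPU : EvType → Prop := fun t => t = .cpu ∨ t = .pl

/-- NIC write events. -/
def EvType.isNICWrite : EvType → Prop := fun t => t = .nlW ∨ t = .nrW

/-- The table for issue-preserved program order (ippo). -/
def ippoTbl : EvType → EvType → Prop
  | .cpu, _ => True
  | .pl, _ => True
  | .nlR, .cpu => False
  | .nlR, .pl => False
  | .nlR, _ => True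
  | .nrW, .nrW => True
  | .nrW, .nrR => True
  | .nrW, .nlW => True
  | .nrW, .nF => True
  | .nrW, _ => False
  | .nrR, .nlW => True
  | .nrR, .nF => True
  | .nrR, _ => False
  | .nlW, .nlW => True
  | .nlW, .nF => True
  | .nlW, _ => False
  | .nF, .cpu => False
  | .nF, .pl => False
  | .nF, _ => True

/-- The table for observation-preserved program order (oppo): like `ippoTbl` except
that NIC-write → fence edges (`nrW → nF` and `nlW → nF`) are only in ippo. -/
def oppoTbl : EvType → EvType → Prop
  | .nrW, .nF => False
  | .nlW, .nF => False
  | a, b => ippoTbl a b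

lemma tblLemma : ∀ x y, ippoTbl x y → y ≠ EvType.nF → oppoTbl x y := by
  intro x y
  cases x <;> cases y <;> simp [ippoTbl, oppoTbl]

/-- `ippo \ oppo` consists only of edges targeting a NIC fence,
`[nrW]; pf` consists only of edges targeting a poll, and hence every edge in
`(ippo ∪ rf ∪ pf ∪ nfo) \ ob` lies in `(po ; [nF]) ∪ ([nrW]; pf)` and has an
instantaneous target. -/
theorem stmt15 {E : Type} (ty : E → EvType)
    (po sqp rf pf nfo ob ippo oppo : E → E → Prop)
    (hippo : ∀ a b, ippo a b ↔
      po a b ∧ ((ty a).isCPU ∨ sqp a b) ∧ ippoTbl (ty a) (ty b))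
    (hoppo : ∀ a b, oppo a b ↔
      po a b ∧ ((ty a).isCPU ∨ sqp a b) ∧ oppoTbl (ty a) (ty b))
    (hpf : ∀ w p, pf w p →
      (ty w).isNICWrite ∧ ty p = .pl ∧ po w p ∧ sqp w p)
    (hob_oppo : ∀ a b, oppo a b → ob a b)
    (hob_rf : ∀ a b, rf a b → ob a b)
    (hob_nfo : ∀ a b, nfo a b → ob a b)
    (hob_nlWpf : ∀ w p, pf w p → ty w = .nlW → ob w p) :
    (∀ a b, ippo a b → ¬ oppo a b → ty b = .nF) ∧
    (∀ a b, ty a = .nrW → pf a b → ty b = .pl) ∧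
    (∀ a b, (ippo a b ∨ rf a b ∨ pf a b ∨ nfo a b) → ¬ ob a b →
      ((po a b ∧ ty b = .nF) ∨ (ty a = .nrW ∧ pf a b)) ∧
      ty b ≠ .nlW ∧ ty b ≠ .nrW) := by

  have key : ∀ a b, ippo a b → ¬ oppo a b → ty b = .nF := by
    intro a b hi ho
    rw [hippo] at hi
    obtain ⟨hpo, hs, ht⟩ := hi
    by_contra hb
    exact ho ((hoppo a b).mpr ⟨hpo, hs, tblLemma _ _ ht hb⟩)
  refine ⟨key, ?_, ?_⟩
  · intro a b _ hp; exact (hpf a b hp).2.1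
  · intro a b h hob
    have main : (po a b ∧ ty b = .nF) ∨ (ty a = .nrW ∧ pf a b) := by
      rcases h with hi | hr | hp | hn
      · have ho : ¬ oppo a b := fun ho => hob (hob_oppo a b ho)
        exact Or.inl ⟨((hippo a b).mp hi).1, key a b hi ho⟩
      · exact absurd (hob_rf a b hr) hob
      · obtain ⟨hw, _, _, _⟩ := hpf a b hp
        rcases hw with hw | hw
        · exact absurd (hob_nlWpf a b hp hw) hob
        · exact Or.inr ⟨hw, hp⟩
      · exact absurd (hob_nfo a b hn) hob
    refine ⟨main, ?_, ?_⟩ <;>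
    · rcases main with ⟨_, hb⟩ | ⟨_, hp⟩
      · simp [hb]
      · simp [(hpf a b hp).2.1]
end
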